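/- arXiv:2502.03613 — 2 statements merged into one kernel-verified Lean document; each statement's English description precedes it below -/
import Mathlib

section
/- Let p and ℓ be primes with p > ℓ and p ≡ 1 (mod 4). If a, b are integers with b ≠ 0 and a² + b²p = ℓ², then 2ℓ - p is a perfect square; more precisely, |a| = p - ℓ and b² = 2ℓ - p. -/
/-!
Since `b ≠ 0`, `|a| < ℓ < p`, and `p` divides `ℓ² - a² = (ℓ - |a|)(ℓ + |a|)`. The first factor
lies in `(0, p)`, so `p` divides the second, which lies in `(0, 2p)`; hence `ℓ + |a| = p`.
Substituting `|a| = p - ℓ` gives `b² p = ℓ² - (p - ℓ)² = (2ℓ - p) p`.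
-/

theorem Int.eq_of_dvd_of_pos_of_lt_two_mul {m n : ℤ} (hdvd : m ∣ n) (hn : 0 < n)
    (hlt : n < 2 * m) : n = m := by
  obtain ⟨k, rfl⟩ := hdvd
  have hk : k = 1 := by nlinarith
  rw [hk, mul_one]

theorem add_abs_eq_of_sq_add_sq_mul_eq_sq {p ℓ a b : ℤ} (hp : Prime p) (hℓ : 0 ≤ ℓ)
    (hgt : ℓ < p) (hb : b ≠ 0) (hnorm : a ^ 2 + b ^ 2 * p = ℓ ^ 2) : ℓ + |a| = p := by
  have hlt : |a| < ℓ := by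
    have hbp : 0 < b ^ 2 * p := mul_pos (by positivity) (by linarith)
    have hsq : a ^ 2 < ℓ ^ 2 := by linarith
    simpa [abs_of_nonneg hℓ] using sq_lt_sq.mp hsq
  have hdvd : p ∣ (ℓ - |a|) * (ℓ + |a|) :=
    ⟨b ^ 2, by rw [← sq_abs a] at hnorm; linear_combination -hnorm⟩
  rcases hp.dvd_mul.mp hdvd with hdiff | hsum
  · exact absurd (Int.le_of_dvd (by linarith) hdiff) (by linarith [abs_nonneg a])
  · exact Int.eq_of_dvd_of_pos_of_lt_two_mul hsum (by linarith [abs_nonneg a]) (by linarith)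

theorem stmt_5_general (p ℓ : ℕ) (hp : p.Prime) (hgt : ℓ < p)
    (a b : ℤ) (hb : b ≠ 0)
    (hnorm : a ^ 2 + b ^ 2 * (p : ℤ) = (ℓ : ℤ) ^ 2) :
    |a| = (p : ℤ) - (ℓ : ℤ) ∧ b ^ 2 = 2 * (ℓ : ℤ) - (p : ℤ) := by
  have hsum : (ℓ : ℤ) + |a| = p :=
    add_abs_eq_of_sq_add_sq_mul_eq_sq (Nat.prime_iff_prime_int.mp hp) (Int.natCast_nonneg ℓ)
      (by exact_mod_cast hgt) hb hnorm
  have habs : |a| = (p : ℤ) - ℓ := by linarith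
  refine ⟨habs, mul_right_cancel₀ (Int.natCast_ne_zero.mpr hp.ne_zero) ?_⟩
  rw [← sq_abs a, habs] at hnorm
  linear_combination hnorm

/-- If `p > ℓ` are primes with `p ≡ 1 (mod 4)` and `a² + b²p = ℓ²` with `b ≠ 0`,
then `|a| = p - ℓ` and `b² = 2ℓ - p` (so `2ℓ - p` is a perfect square). -/
theorem stmt_5 (p ℓ : ℕ) (hp : p.Prime) (hℓ : ℓ.Prime) (hgt : ℓ < p)
    (hmod : p % 4 = 1) (a b : ℤ) (hb : b ≠ 0)
    (hnorm : a ^ 2 + b ^ 2 * (p : ℤ) = (ℓ : ℤ) ^ 2) :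
    |a| = (p : ℤ) - (ℓ : ℤ) ∧ b ^ 2 = 2 * (ℓ : ℤ) - (p : ℤ) :=
  stmt_5_general p ℓ hp hgt a b hb hnorm
end

section
/- Over Z, the resultant of Φ₂(X,Y) and ∂Φ₂/∂Y(X,Y) with respect to Y equals -4X²(X - 1728)(X + 3375)²(X² + 191025X - 121287375)². -/
open Polynomial

/-- The Sylvester matrix of `f` (viewed with degree `m`) and `g` (viewed with
degree `n`): the first `n` rows are shifts of the coefficients of `f`, the last
`m` rows are shifts of the coefficients of `g`. -/
noncomputable def sylvesterMatrix {R : Type*} [CommRing R] (m n : ℕ)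
    (f g : R[X]) : Matrix (Fin (n + m)) (Fin (n + m)) R :=
  Matrix.of fun i j =>
    if (i : ℕ) < n then
      if (i : ℕ) ≤ (j : ℕ) ∧ (j : ℕ) ≤ (i : ℕ) + m then
        f.coeff (m - ((j : ℕ) - (i : ℕ)))
      else 0
    else
      if (i : ℕ) - n ≤ (j : ℕ) ∧ (j : ℕ) ≤ (i : ℕ) - n + n then
        g.coeff (n - ((j : ℕ) - ((i : ℕ) - n)))
      else 0

/-- The resultant of two polynomials, as the determinant of their Sylvester
matrix. -/
noncomputable def resultant {R : Type*} [CommRing R] (f g : R[X]) : R :=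
  (sylvesterMatrix f.natDegree g.natDegree f g).det

/-- The level 2 modular polynomial `Φ₂(X,Y)`, viewed as a polynomial in `Y`
with coefficients in `ℤ[X]` (the outer variable is `Y`). -/
noncomputable def Phi2 : (Polynomial ℤ)[X] :=
  let x : (Polynomial ℤ)[X] := C X
  let y : (Polynomial ℤ)[X] := X
  x ^ 3 + y ^ 3 - x ^ 2 * y ^ 2 + 1488 * (x ^ 2 * y + x * y ^ 2)
    - 162000 * (x ^ 2 + y ^ 2) + 40773375 * (x * y)
    + 8748000000 * (x + y) - 157464000000000

/-!
The Sylvester matrix used here is the transpose of Mathlib's `Polynomial.sylvester` with rows and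
columns listed in reverse order, so both give the same resultant. For a cubic `f` with leading
coefficient `1`, Mathlib's `resultant_deriv` gives `Res(f, f') = -disc f`, and the cubic discriminant
formula evaluated on the coefficients of `Φ₂` in `ℤ[X]` factors as claimed.
-/

theorem sylvesterMatrix_eq_reindex_transpose_sylvester {R : Type*} [CommRing R] (m n : ℕ)
    (f g : R[X]) :
    sylvesterMatrix m n f g =
      Matrix.reindex (Fin.revPerm.trans (finCongr (add_comm m n)))
        (Fin.revPerm.trans (finCongr (add_comm m n))) (sylvester f g m n).transpose := by
  ext i j
  simp only [sylvesterMatrix, sylvester, Matrix.reindex_apply, Matrix.submatrix_apply,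
    Matrix.transpose_apply, Matrix.of_apply, Equiv.symm_trans_apply, finCongr_symm, finCongr_apply,
    Fin.revPerm_symm, Fin.revPerm_apply]
  unfold Fin.addCases
  simp only [Fin.val_rev, Fin.val_cast, Set.mem_Icc]
  split_ifs <;> simp_all <;> first | omega | (congr 1; omega)

theorem resultant_eq_polynomial_resultant {R : Type*} [CommRing R] (f g : R[X]) :
    _root_.resultant f g = Polynomial.resultant f g := by
  rw [_root_.resultant, sylvesterMatrix_eq_reindex_transpose_sylvester, Matrix.det_reindex_self,
    Matrix.det_transpose, Polynomial.resultant]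

noncomputable def phi2Cubic : Cubic ℤ[X] :=
  ⟨1, -X ^ 2 + 1488 * X - 162000, 1488 * X ^ 2 + 40773375 * X + 8748000000,
    X ^ 3 - 162000 * X ^ 2 + 8748000000 * X - 157464000000000⟩

theorem Phi2_eq_toPoly : Phi2 = phi2Cubic.toPoly := by
  simp only [Phi2, phi2Cubic, Cubic.toPoly, map_add, map_sub, map_mul, map_pow, map_neg,
    map_one, map_ofNat]
  ring

/-- `Res(Φ₂, ∂Φ₂/∂Y; Y) = -4X²(X - 1728)(X + 3375)²(X² + 191025X - 121287375)²`
in `ℤ[X]`. -/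
theorem stmt_10 :
    _root_.resultant Phi2 (derivative Phi2)
      = -4 * X ^ 2 * (X - 1728) * (X + 3375) ^ 2
          * (X ^ 2 + 191025 * X - 121287375) ^ 2 := by
  have hdeg : phi2Cubic.toPoly.degree = 3 := Cubic.degree_of_a_ne_zero' one_ne_zero
  have hnatDeg : phi2Cubic.toPoly.natDegree = 3 := Cubic.natDegree_of_a_ne_zero' one_ne_zero
  rw [resultant_eq_polynomial_resultant, Phi2_eq_toPoly, natDegree_derivative,
    resultant_deriv (by rw [hdeg]; decide), discr_of_degree_eq_three hdeg, hnatDeg,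
    Cubic.leadingCoeff_of_a_ne_zero (P := phi2Cubic) one_ne_zero]
  simp only [Cubic.coeff_eq_a, Cubic.coeff_eq_b, Cubic.coeff_eq_c, Cubic.coeff_eq_d, phi2Cubic]
  ring
end
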